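/- arXiv:0706.2295 — 3 statements merged into one kernel-verified Lean document; each statement's English description precedes it below -/
import Mathlib

section
/- For every natural number n, ∑_{k=0}^{⌊n/2⌋} (−1/4)^k C(n−k, k) = (n+1) · 2^{−n}. -/
/-!
The weighted diagonal sums `s n = ∑_{i + j = n} x ^ i C(j, i)` satisfy the Fibonacci-type recurrence
`s (n + 2) = s (n + 1) + x s n` by Pascal's rule. For `x = -1/4` its characteristic polynomial
`t ^ 2 - t + 1/4` has the double root `1/2`, so `s n = (n + 1) / 2 ^ n`. Terms with `k > n / 2`
vanish since then `C(n - k, k) = 0`.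
-/

open Finset

namespace Nat

/-- At `x = 1` this is `fib (n + 1)`, see `Nat.fib_succ_eq_sum_choose`. -/
def diagonalChooseSum {R : Type*} [CommSemiring R] (x : R) (n : ℕ) : R :=
  ∑ p ∈ antidiagonal n, x ^ p.1 * (p.2.choose p.1 : R)

section CommSemiring

variable {R : Type*} [CommSemiring R] (x : R)

@[simp]
theorem diagonalChooseSum_zero : diagonalChooseSum x 0 = 1 := by
  simp [diagonalChooseSum]

@[simp]
theorem diagonalChooseSum_one : diagonalChooseSum x 1 = 1 := by
  simp [diagonalChooseSum, Nat.sum_antidiagonal_succ]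

theorem diagonalChooseSum_add_two (n : ℕ) :
    diagonalChooseSum x (n + 2) = diagonalChooseSum x (n + 1) + x * diagonalChooseSum x n := by
  have hn1 : diagonalChooseSum x (n + 1) =
      1 + ∑ p ∈ antidiagonal n, x ^ (p.1 + 1) * (p.2.choose (p.1 + 1) : R) := by
    simp [diagonalChooseSum, Nat.sum_antidiagonal_succ]
  have hn2 : diagonalChooseSum x (n + 2) =
      1 + ∑ p ∈ antidiagonal n, x ^ (p.1 + 1) * ((p.2 + 1).choose (p.1 + 1) : R) := by
    rw [diagonalChooseSum, Nat.sum_antidiagonal_succ, Nat.sum_antidiagonal_succ']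
    simp
  have hx : x * diagonalChooseSum x n =
      ∑ p ∈ antidiagonal n, x ^ (p.1 + 1) * (p.2.choose p.1 : R) := by
    rw [diagonalChooseSum, mul_sum]
    exact sum_congr rfl fun p _ => by ring
  rw [hn1, hn2, hx, add_assoc, ← sum_add_distrib]
  refine congrArg _ (sum_congr rfl fun p _ => ?_)
  rw [choose_succ_succ', cast_add, mul_add, add_comm]

theorem diagonalChooseSum_eq_sum_range_div_two (n : ℕ) :
    diagonalChooseSum x n = ∑ k ∈ range (n / 2 + 1), x ^ k * ((n - k).choose k : R) := by
  rw [diagonalChooseSum, Nat.sum_antidiagonal_eq_sum_range_succ_mk]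
  refine (sum_subset (fun k hk => ?_) fun k _ hk => ?_).symm
  · simp only [mem_range] at hk ⊢
    omega
  · simp only [mem_range, not_lt] at hk
    simp [choose_eq_zero_of_lt (by omega : n - k < k)]

end CommSemiring

theorem diagonalChooseSum_neg_one_div_four {K : Type*} [Field K] (h2 : (2 : K) ≠ 0) (n : ℕ) :
    diagonalChooseSum (-1 / 4 : K) n = (n + 1) / 2 ^ n := by
  induction n using Nat.twoStepInduction with
  | zero => simp
  | one => simp [one_add_one_eq_two, h2]
  | more n ih ih' =>
    have h4 : (4 : K) ≠ 0 := by
      simpa [show (4 : K) = 2 * 2 by norm_num] using mul_ne_zero h2 h2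
    rw [diagonalChooseSum_add_two, ih, ih']
    field_simp
    push_cast
    ring

end Nat

/-- `∑_{k=0}^{⌊n/2⌋} (−1/4)^k C(n−k, k) = (n+1)·2^{−n}`. -/
theorem diagonal_binomial_sum_degenerate (n : ℕ) :
    ∑ k ∈ Finset.range (n / 2 + 1), (-1 / 4 : ℚ) ^ k * ((n - k).choose k : ℚ)
      = (n + 1 : ℚ) / 2 ^ n := by
  rw [← Nat.diagonalChooseSum_eq_sum_range_div_two,
    Nat.diagonalChooseSum_neg_one_div_four two_ne_zero]
end

section
/- Let L0, L1 be elements of a noncommutative ring R and define the operator-valued sequence S : ℕ → R by S(p) = ∑_{t=0}^{⌊(p-1)/2⌋} {L0^(t) L1^(p−1−2t)}. Then S satisfies the recurrence S(p+2) = L0·S(p) + L1·S(p+1) with S(0) = 0, S(1) = 1 (the ring unit). -/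
/-- The sum over all words consisting of `u` copies of `L0` and `v` copies of `L1`
of the ordered product of the letters.  A word is encoded as a function
`Fin (u+v) → Bool`, with `false` standing for `L0` and `true` for `L1`. -/
def wordSum {R : Type*} [Ring R] (L0 L1 : R) (u v : ℕ) : R :=
  ∑ w ∈ Finset.univ.filter (fun f : Fin (u + v) → Bool =>
      (Finset.univ.filter (fun i => f i = false)).card = u),
    (List.ofFn fun i => if w i then L1 else L0).prod

/-- word sum with explicit length. -/
def ws {R : Type*} [Ring R] (L0 L1 : R) (n u : ℕ) : R :=
  ∑ w ∈ Finset.univ.filter (fun f : Fin n → Bool =>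
      (Finset.univ.filter (fun i => f i = false)).card = u),
    (List.ofFn fun i => if w i then L1 else L0).prod

lemma wordSum_eq_ws {R : Type*} [Ring R] (L0 L1 : R) (u v : ℕ) :
    wordSum L0 L1 u v = ws L0 L1 (u + v) u := rfl

lemma ws_zero {R : Type*} [Ring R] (L0 L1 : R) : ws L0 L1 0 0 = 1 := by
  simp [ws, List.ofFn_zero]

lemma ws_eq_zero {R : Type*} [Ring R] (L0 L1 : R) {n u : ℕ} (h : n < u) :
    ws L0 L1 n u = 0 := by
  apply Finset.sum_eq_zero
  intro w hw
  simp only [Finset.mem_filter] at hw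
  have h2 := Finset.card_filter_le Finset.univ (fun i : Fin n => w i = false)
  simp at h2
  omega

lemma sum_cons {R : Type*} [Ring R] (n : ℕ) (F : (Fin (n+1) → Bool) → R) :
    ∑ w : Fin (n+1) → Bool, F w
      = ∑ g : Fin n → Bool, (F (Fin.cons false g) + F (Fin.cons true g)) := by
  rw [← (Fin.consEquiv (fun _ : Fin (n+1) => Bool)).sum_comp, Fintype.sum_prod_type,
    Fintype.sum_bool]
  simp [Fin.consEquiv, Finset.sum_add_distrib, add_comm]

lemma card_cons (n : ℕ) (b : Bool) (g : Fin n → Bool) :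
    (Finset.univ.filter (fun i : Fin (n+1) => Fin.cons (α := fun _ => Bool) b g i = false)).card
      = (if b = false then 1 else 0)
        + (Finset.univ.filter (fun i : Fin n => g i = false)).card := by
  rw [Finset.card_filter, Finset.card_filter, Fin.sum_univ_succ]
  simp

lemma prod_cons {R : Type*} [Ring R] (L0 L1 : R) (n : ℕ) (b : Bool) (g : Fin n → Bool) :
    (List.ofFn fun i : Fin (n+1) => if Fin.cons (α := fun _ => Bool) b g i then L1 else L0).prod
      = (if b then L1 else L0) * (List.ofFn fun i => if g i then L1 else L0).prod := by
  rw [List.ofFn_succ]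
  simp

lemma ws_split {R : Type*} [Ring R] (L0 L1 : R) (n u : ℕ) :
    ws L0 L1 (n+1) u =
      (∑ g ∈ Finset.univ.filter (fun g : Fin n → Bool =>
          (Finset.univ.filter (fun i => g i = false)).card + 1 = u),
        L0 * (List.ofFn fun i => if g i then L1 else L0).prod)
      + L1 * ws L0 L1 n u := by
  unfold ws
  rw [Finset.sum_filter, Finset.sum_filter, Finset.sum_filter, sum_cons, Finset.sum_add_distrib,
    Finset.mul_sum]
  congr 1
  · apply Finset.sum_congr rfl
    intro g _
    rw [card_cons, prod_cons]
    simp [add_comm]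
  · apply Finset.sum_congr rfl
    intro g _
    rw [card_cons, prod_cons]
    simp [mul_ite, mul_assoc]

lemma ws_succ_zero {R : Type*} [Ring R] (L0 L1 : R) (n : ℕ) :
    ws L0 L1 (n+1) 0 = L1 * ws L0 L1 n 0 := by
  rw [ws_split]
  simp

lemma ws_succ_succ {R : Type*} [Ring R] (L0 L1 : R) (n u : ℕ) :
    ws L0 L1 (n+1) (u+1) = L0 * ws L0 L1 n u + L1 * ws L0 L1 n (u+1) := by
  rw [ws_split]
  congr 1
  rw [ws, Finset.mul_sum]
  apply Finset.sum_congr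
  · congr 1
    ext g
    simp
  · intros; rfl

/-- The fundamental operator solution `S p = ∑_t {L0^(t) L1^(p−1−2t)}`
satisfies the noncommutative recurrence with `S 0 = 0`, `S 1 = 1`. -/
theorem fundamental_solution {R : Type*} [Ring R] (L0 L1 : R)
    (S : ℕ → R) (h0 : S 0 = 0)
    (hS : ∀ p : ℕ, 1 ≤ p →
      S p = ∑ t ∈ Finset.range ((p - 1) / 2 + 1), wordSum L0 L1 t (p - 1 - 2 * t)) :
    S 1 = 1 ∧ ∀ p : ℕ, S (p + 2) = L0 * S p + L1 * S (p + 1) := by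
  have h1 : S 1 = 1 := by
    rw [hS 1 le_rfl]
    norm_num [wordSum_eq_ws, ws_zero]
  refine ⟨h1, fun p => ?_⟩
  -- rewrite S p (for p ≥ 1) as a sum of `ws (p-1-t) t`
  have key : ∀ c : ℕ, (∑ t ∈ Finset.range (c / 2 + 1), wordSum L0 L1 t (c - 2 * t))
      = ∑ t ∈ Finset.range (c / 2 + 1), ws L0 L1 (c - t) t := by
    intro c
    apply Finset.sum_congr rfl
    intro t ht
    rw [Finset.mem_range] at ht
    rw [wordSum_eq_ws]
    congr 1
    omega
  match p with
  | 0 =>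
    rw [hS 2 (by norm_num), h0, h1]
    norm_num [wordSum_eq_ws]
    show ws L0 L1 1 0 = L1
    rw [ws_succ_zero, ws_zero, mul_one]
  | (q+1) =>
    rw [hS (q+3) (by omega), hS (q+1) (by omega), hS (q+2) (by omega)]
    have e3 : q + 3 - 1 = q + 2 := by omega
    have e2 : q + 2 - 1 = q + 1 := by omega
    have e1 : q + 1 - 1 = q := by omega
    rw [e3, e2, e1, key, key, key]
    -- peel off the t = 0 term on the left
    rw [Finset.sum_range_succ']
    have hm : (q + 2) / 2 = q / 2 + 1 := by omega
    rw [hm]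
    have step : ∀ s ∈ Finset.range (q / 2 + 1),
        ws L0 L1 (q + 2 - (s + 1)) (s + 1)
          = L0 * ws L0 L1 (q - s) s + L1 * ws L0 L1 (q - s) (s + 1) := by
      intro s hs
      rw [Finset.mem_range] at hs
      have : q + 2 - (s + 1) = (q - s) + 1 := by omega
      rw [this, ws_succ_succ]
    rw [Finset.sum_congr rfl step, Finset.sum_add_distrib]
    have hz : q + 2 - 0 = (q + 1) + 1 := rfl
    rw [hz, ws_succ_zero, ← Finset.mul_sum, ← Finset.mul_sum]
    -- right side: peel off t = 0 of the second sum
    rw [Finset.sum_range_succ' _ ((q+1)/2)]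
    have hranges : (∑ s ∈ Finset.range (q / 2 + 1), ws L0 L1 (q - s) (s + 1))
        = ∑ s ∈ Finset.range ((q + 1) / 2), ws L0 L1 (q + 1 - (s + 1)) (s + 1) := by
      have harg : ∀ s, q + 1 - (s + 1) = q - s := fun s => by omega
      simp only [harg]
      rcases Nat.mod_two_eq_zero_or_one q with he | ho
      · have h2 : q / 2 + 1 = (q + 1) / 2 + 1 := by omega
        rw [h2, Finset.sum_range_succ]
        have : ws L0 L1 (q - (q + 1) / 2) ((q + 1) / 2 + 1) = 0 := by
          apply ws_eq_zero
          omega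
        rw [this, add_zero]
      · have h2 : q / 2 + 1 = (q + 1) / 2 := by omega
        rw [h2]
    rw [hranges]
    have hz2 : q + 1 - 0 = q + 1 := rfl
    rw [hz2, mul_add, add_assoc]
end

section
/- Let A be the ring of n×n complex matrices, L0, L1 ∈ A, and v ∈ ℂ^n. Define Y : ℕ → ℂ^n by Y 0 = 0, Y 1 = v, Y(p+2) = L0 Y(p) + L1 Y(p+1). Then Y(p) = (∑ over subsets/words: ∑_{t=0}^{⌊(p−1)/2⌋} ∑_{w} w) v, where the inner sum ranges over all products w of t factors L0 and p−1−2t factors L1 in every order. -/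
section Aux
open Finset
variable {R : Type*} [Ring R]

def W (L0 L1 : R) (m c : ℕ) : R :=
  ∑ f ∈ Finset.univ.filter (fun f : Fin m → Bool =>
      (Finset.univ.filter (fun i => f i = false)).card = c),
    (List.ofFn fun i => if f i then L1 else L0).prod

lemma W_zero (L0 L1 : R) : W L0 L1 0 0 = 1 := by
  rw [W, Finset.sum_filter]
  simp

lemma W_of_gt (L0 L1 : R) {m c : ℕ} (h : m < c) : W L0 L1 m c = 0 := by
  rw [W]
  apply Finset.sum_eq_zero
  intro f hf
  simp only [Finset.mem_filter] at hf
  have h2 := Finset.card_filter_le Finset.univ (fun i : Fin m => f i = false)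
  simp [Finset.card_univ] at h2
  omega

lemma count_cons (b : Bool) (m : ℕ) (g : Fin m → Bool) :
    (Finset.univ.filter (fun i => (Fin.cons b g : Fin (m+1) → Bool) i = false)).card
      = (if b = false then 1 else 0) + (Finset.univ.filter (fun i => g i = false)).card := by
  rw [Finset.card_filter, Finset.card_filter, Fin.sum_univ_succ]
  simp [Fin.cons_zero, Fin.cons_succ]

lemma myprod_cons (L0 L1 : R) (b : Bool) (m : ℕ) (g : Fin m → Bool) :
    (List.ofFn fun i : Fin (m+1) => if (Fin.cons b g : Fin (m+1) → Bool) i then L1 else L0).prod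
      = (if b then L1 else L0) * (List.ofFn fun i => if g i then L1 else L0).prod := by
  rw [List.ofFn_succ]
  simp [Fin.cons_zero, Fin.cons_succ]

lemma W_succ (L0 L1 : R) (m c : ℕ) :
    W L0 L1 (m+1) c = (if c = 0 then 0 else L0 * W L0 L1 m (c-1)) + L1 * W L0 L1 m c := by
  have hsplit : W L0 L1 (m+1) c
      = (∑ g : Fin m → Bool, if (Finset.univ.filter fun i => g i = false).card + 1 = c then
            L0 * (List.ofFn fun i => if g i then L1 else L0).prod else 0)
      + (∑ g : Fin m → Bool, if (Finset.univ.filter fun i => g i = false).card = c then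
            L1 * (List.ofFn fun i => if g i then L1 else L0).prod else 0) := by
    rw [W, Finset.sum_filter]
    rw [← Fintype.sum_equiv (Fin.consEquiv fun _ : Fin (m+1) => Bool)
      (fun p : Bool × (Fin m → Bool) =>
        if (Finset.univ.filter (fun i => (Fin.cons p.1 p.2 : Fin (m+1) → Bool) i = false)).card = c
          then (List.ofFn fun i : Fin (m+1) => if (Fin.cons p.1 p.2 : Fin (m+1) → Bool) i then L1 else L0).prod else 0)
      _ (fun p => rfl)]
    rw [Fintype.sum_prod_type, Fintype.sum_bool, add_comm]
    congr 1
    · apply Finset.sum_congr rfl; intro g _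
      rw [count_cons, myprod_cons]
      norm_num
      rw [if_congr (by omega : (1 + (Finset.univ.filter fun i => g i = false).card = c)
        ↔ ((Finset.univ.filter fun i => g i = false).card + 1 = c)) rfl rfl]
    · apply Finset.sum_congr rfl; intro g _
      rw [count_cons, myprod_cons]
      norm_num
  rw [hsplit]
  congr 1
  · rcases eq_or_ne c 0 with rfl | hc
    · rw [if_pos rfl]
      apply Finset.sum_eq_zero; intro g _
      rw [if_neg (by omega)]
    · rw [if_neg hc, W, Finset.sum_filter, Finset.mul_sum]
      apply Finset.sum_congr rfl; intro g _
      rw [if_congr (by omega : ((Finset.univ.filter fun i => g i = false).card + 1 = c)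
        ↔ ((Finset.univ.filter fun i => g i = false).card = c - 1)) rfl rfl]
      split <;> simp
  · rw [W, Finset.sum_filter, Finset.mul_sum]
    apply Finset.sum_congr rfl; intro g _
    split <;> simp

lemma wordSum_eq_W (L0 L1 : R) (u v : ℕ) : wordSum L0 L1 u v = W L0 L1 (u + v) u := rfl

lemma wordSum_split (L0 L1 : R) (u v m : ℕ) (h : u + v = m + 1) :
    wordSum L0 L1 u v
      = (if u = 0 then 0 else L0 * wordSum L0 L1 (u - 1) v)
      + (if v = 0 then 0 else L1 * wordSum L0 L1 u (v - 1)) := by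
  rw [wordSum_eq_W, h, W_succ]
  congr 1
  · rcases eq_or_ne u 0 with rfl | hu
    · simp
    · rw [if_neg hu, if_neg hu, wordSum_eq_W]
      congr 2
      omega
  · rcases eq_or_ne v 0 with rfl | hv
    · rw [if_pos rfl, W_of_gt L0 L1 (by omega), mul_zero]
    · rw [if_neg hv, wordSum_eq_W]
      congr 2
      omega

lemma T_rec (L0 L1 : R) (p : ℕ) (hp : 1 ≤ p) :
    (∑ t ∈ Finset.range ((p + 1) / 2 + 1), wordSum L0 L1 t (p + 1 - 2 * t))
      = L0 * (∑ t ∈ Finset.range ((p - 1) / 2 + 1), wordSum L0 L1 t (p - 1 - 2 * t))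
      + L1 * (∑ t ∈ Finset.range (p / 2 + 1), wordSum L0 L1 t (p - 2 * t)) := by
  have step : ∀ t ∈ Finset.range ((p + 1) / 2 + 1),
      wordSum L0 L1 t (p + 1 - 2 * t)
        = (if t = 0 then 0 else L0 * wordSum L0 L1 (t - 1) (p + 1 - 2 * t))
        + (if p + 1 - 2 * t = 0 then 0 else L1 * wordSum L0 L1 t (p - 2 * t)) := by
    intro t ht
    rw [Finset.mem_range] at ht
    rw [wordSum_split L0 L1 t (p + 1 - 2 * t) (p - t) (by omega),
        show p + 1 - 2 * t - 1 = p - 2 * t from by omega]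
  rw [Finset.sum_congr rfl step, Finset.sum_add_distrib]
  congr 1
  · rw [show (p + 1) / 2 + 1 = ((p + 1) / 2 - 1) + 1 + 1 by omega, Finset.sum_range_succ']
    rw [if_pos rfl, add_zero, Finset.mul_sum]
    rw [show (p + 1) / 2 - 1 + 1 = (p - 1) / 2 + 1 by omega]
    apply Finset.sum_congr rfl
    intro t ht
    rw [if_neg (by omega), Nat.add_sub_cancel]
    congr 2
    omega
  · rw [Finset.mul_sum]
    rw [← Finset.sum_subset (Finset.range_subset_range.2 (by omega : p / 2 + 1 ≤ (p + 1) / 2 + 1))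
      (fun t ht hnt => by
        rw [Finset.mem_range] at ht
        rw [Finset.mem_range, not_lt] at hnt
        rw [if_pos (by omega)])]
    apply Finset.sum_congr rfl
    intro t ht
    rw [Finset.mem_range] at ht
    rw [if_neg (by omega)]

end Aux

/-- The noncommutative solution formula for matrices acting on vectors. -/
theorem matrix_cauchy_solution {n : ℕ} (L0 L1 : Matrix (Fin n) (Fin n) ℂ)
    (v : Fin n → ℂ) (Y : ℕ → Fin n → ℂ)
    (h0 : Y 0 = 0) (h1 : Y 1 = v)
    (hrec : ∀ p : ℕ, Y (p + 2) = L0.mulVec (Y p) + L1.mulVec (Y (p + 1))) :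
    ∀ p : ℕ, 1 ≤ p →
      Y p = (∑ t ∈ Finset.range ((p - 1) / 2 + 1),
              wordSum L0 L1 t (p - 1 - 2 * t)).mulVec v := by
  intro p
  induction p using Nat.strong_induction_on with
  | _ p ih =>
    match p with
    | 0 => intro h; omega
    | 1 =>
      intro _
      rw [show (1 - 1) / 2 + 1 = 1 from rfl, Finset.sum_range_one]
      rw [show wordSum L0 L1 0 (1 - 1 - 2 * 0) = W L0 L1 0 0 from rfl, W_zero,
        Matrix.one_mulVec, h1]
    | 2 =>
      intro _
      rw [show (2 - 1) / 2 + 1 = 1 from rfl, Finset.sum_range_one]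
      rw [show wordSum L0 L1 0 (2 - 1 - 2 * 0) = W L0 L1 1 0 from rfl, W_succ, W_zero]
      rw [show Y 2 = L0.mulVec (Y 0) + L1.mulVec (Y 1) from hrec 0, h0, h1,
        Matrix.mulVec_zero, zero_add]
      simp
    | (q + 3) =>
      intro _
      have hY := hrec (q + 1)
      rw [ih (q + 1) (by omega) (by omega), ih (q + 2) (by omega) (by omega)] at hY
      rw [show q + 1 + 2 = q + 3 from rfl] at hY
      rw [hY, Matrix.mulVec_mulVec, Matrix.mulVec_mulVec, ← Matrix.add_mulVec]
      exact congrArg (fun M : Matrix (Fin n) (Fin n) ℂ => M.mulVec v)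
        (T_rec L0 L1 (q + 1) (by omega)).symm
end
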